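/- arXiv:1103.1822 — 2 statements merged into one kernel-verified Lean document; each statement's English description precedes it below -/
import Mathlib

section
/- Let f be measurable on ℝⁿ with ∫ |f| dx = 1, and let g be measurable with ∫_{ℝⁿ} e^{|g(x)|}/(e+|x|)^{n+1} dx ≤ κ for some κ ≥ 0. Then ∫_{ℝⁿ} |f(x)g(x)| / ((n+1)(log(e+|x|) + log(e+|f(x)g(x)|))) dx ≤ κ + 1. -/
open MeasureTheory

lemma key_pointwise (n : ℕ) (s t a : ℝ) (hs : 0 ≤ s) (ht : 0 ≤ t) (ha : 0 ≤ a) :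
    s * t / (((n : ℝ) + 1) * (Real.log (Real.exp 1 + a) + Real.log (Real.exp 1 + s * t))) ≤
      Real.exp t / (Real.exp 1 + a) ^ ((n : ℝ) + 1) + s := by
  set e1 := Real.exp 1 with he1
  have he1pos : 0 < e1 := Real.exp_pos 1
  have hla : (1 : ℝ) ≤ Real.log (e1 + a) := by
    rw [Real.le_log_iff_exp_le (by positivity)]; linarith
  have hlst : (1 : ℝ) ≤ Real.log (e1 + s * t) := by
    rw [Real.le_log_iff_exp_le (by positivity)]; nlinarith
  set M := ((n : ℝ) + 1) * Real.log (e1 + a) with hM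
  set D := ((n : ℝ) + 1) * (Real.log (e1 + a) + Real.log (e1 + s * t)) with hD
  have hn : (0 : ℝ) ≤ (n : ℝ) := Nat.cast_nonneg n
  have hDge : M + Real.log (e1 + s * t) ≤ D := by
    have : Real.log (e1 + s * t) ≤ ((n : ℝ) + 1) * Real.log (e1 + s * t) := by nlinarith
    rw [hD, mul_add]; linarith
  have hD1 : (1 : ℝ) ≤ D := by nlinarith
  have hDpos : (0 : ℝ) < D := by linarith
  have hpow : (e1 + a) ^ ((n : ℝ) + 1) = Real.exp M := by
    rw [Real.rpow_def_of_pos (by positivity), hM, mul_comm]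
  by_cases h : t ≤ M + Real.log (e1 + s * t)
  · have hst : s * t / D ≤ s := by
      rw [div_le_iff₀ hDpos]
      nlinarith [mul_le_mul_of_nonneg_left (h.trans hDge) hs]
    have hpos : 0 ≤ Real.exp t / (e1 + a) ^ ((n : ℝ) + 1) := by positivity
    linarith
  · push_neg at h
    have hlt : e1 + s * t < Real.exp (t - M) := by
      have := Real.exp_lt_exp.mpr (show Real.log (e1 + s * t) < t - M by linarith)
      rwa [Real.exp_log (by positivity)] at this
    have hst : s * t < Real.exp t / (e1 + a) ^ ((n : ℝ) + 1) := by
      rw [hpow, ← Real.exp_sub]; linarith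
    have hdiv : s * t / D ≤ s * t := div_le_self (by positivity) hD1
    linarith

theorem L1_times_expClass_integral_bound (n : ℕ)
    (f g : EuclideanSpace ℝ (Fin n) → ℝ) (hf : Measurable f) (hg : Measurable g)
    (κ : ℝ) (hκ : 0 ≤ κ)
    (hf1 : ∫⁻ x, ENNReal.ofReal |f x| = 1)
    (hgκ : ∫⁻ x, ENNReal.ofReal (Real.exp |g x| / (Real.exp 1 + ‖x‖) ^ ((n : ℝ) + 1))
        ≤ ENNReal.ofReal κ) :
    ∫⁻ x, ENNReal.ofReal (|f x * g x| /
        (((n : ℝ) + 1) * (Real.log (Real.exp 1 + ‖x‖) + Real.log (Real.exp 1 + |f x * g x|))))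
      ≤ ENNReal.ofReal (κ + 1) := by
  have hmono : ∫⁻ x, ENNReal.ofReal (|f x * g x| /
        (((n : ℝ) + 1) * (Real.log (Real.exp 1 + ‖x‖) + Real.log (Real.exp 1 + |f x * g x|))))
      ≤ ∫⁻ x, (ENNReal.ofReal (Real.exp |g x| / (Real.exp 1 + ‖x‖) ^ ((n : ℝ) + 1))
          + ENNReal.ofReal |f x|) := by
    refine lintegral_mono fun x => ?_
    rw [← ENNReal.ofReal_add (by positivity) (abs_nonneg _)]
    refine ENNReal.ofReal_le_ofReal ?_
    have := key_pointwise n (|f x|) (|g x|) (‖x‖) (abs_nonneg _) (abs_nonneg _)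
      (norm_nonneg _)
    rwa [← abs_mul] at this
  refine hmono.trans ?_
  rw [lintegral_add_right _ (hf.abs.ennreal_ofReal), ENNReal.ofReal_add hκ zero_le_one,
    ENNReal.ofReal_one]
  exact add_le_add hgκ hf1.le
end

section
/- Let (a_I)_{I∈𝒟} and (b_I)_{I∈𝒟} be families of reals indexed by the dyadic cubes 𝒟 of ℝⁿ. Then there is a uniform constant C with Σ_{I∈𝒟} |a_I||b_I| ≤ C ‖(Σ_{I∈𝒟} |a_I|² |I|^{-1} χ_I)^{1/2}‖_{L¹} · sup_{R∈𝒟} (|R|^{-1} Σ_{I⊆R} |b_I|²)^{1/2}. -/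
/-!
Stopping time. For a finite family of cubes let `S` be its square function and `Ωₖ = {S > 2ᵏ}`.
Give each cube `I` with `a_I ≠ 0` the last level `k` at which `Ωₖ` fills more than half of `I`;
then `Ωₖ₊₁` fills at most half of it, and as `S ≤ 2ᵏ⁺¹` off `Ωₖ₊₁`, the cubes of level `k` satisfy
`∑ a_I² ≤ 2 ∑ a_I² |I \ Ωₖ₊₁| / |I| ≤ 2 · 4ᵏ⁺¹ |⋃ I|`. The maximal cubes of that level are
disjoint and more than half inside `Ωₖ`, so `|⋃ I| ≤ 2 |Ωₖ|` and, by the Carleson condition,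
`∑ b_I² ≤ 2 B² |Ωₖ|`. Cauchy–Schwarz on each level and `∑ₖ 2ᵏ |Ωₖ| ≤ 2 ∫ S` give `C = 12`.
Of the cubes only laminarity (any two are nested or disjoint) and `0 < |I| < ∞` are used, so the
estimate is proved for finite laminar families of sets in any measure space.
-/

open MeasureTheory

/-- The dyadic cube indexed by generation `j` and position `k`:
`{x | ∀ i, k i ≤ 2^j x i < k i + 1}`, of volume `2^{-jn}`. -/
def dyadicCube (n : ℕ) (I : ℤ × (Fin n → ℤ)) : Set (EuclideanSpace ℝ (Fin n)) :=
  {x | ∀ i, (I.2 i : ℝ) ≤ (2 : ℝ) ^ I.1 * x i ∧ (2 : ℝ) ^ I.1 * x i < (I.2 i : ℝ) + 1}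

open Set
open scoped ENNReal

namespace ENNReal

lemma exists_two_zpow_lt {u : ℝ≥0∞} (hu : u ≠ 0) : ∃ j : ℤ, 2 ^ j < u := by
  obtain ⟨n, hn⟩ := exists_inv_two_pow_lt hu
  refine ⟨-n, ?_⟩
  rwa [ENNReal.zpow_neg, zpow_natCast, ENNReal.inv_pow]

lemma exists_le_two_zpow {u : ℝ≥0∞} (hu : u ≠ ∞) : ∃ K : ℤ, u ≤ 2 ^ K := by
  obtain ⟨n, hn⟩ := exists_inv_two_pow_lt (ENNReal.inv_ne_zero.2 hu)
  rw [← ENNReal.inv_pow, ENNReal.inv_lt_inv] at hn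
  exact ⟨n, by rw [zpow_natCast]; exact hn.le⟩

lemma two_zpow_add_one (k : ℤ) : (2 : ℝ≥0∞) ^ (k + 1) = 2 * 2 ^ k := by
  rw [ENNReal.zpow_add two_ne_zero ofNat_ne_top, zpow_one, mul_comm]

lemma sum_two_zpow_le_two_mul {s : Finset ℤ} {t : ℝ≥0∞} (h : ∀ k ∈ s, (2 : ℝ≥0∞) ^ k ≤ t) :
    ∑ k ∈ s, (2 : ℝ≥0∞) ^ k ≤ 2 * t := by
  classical
  induction s using Finset.induction_on_max generalizing t with
  | empty => simp
  | insert a s hlt ih =>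
    rw [Finset.sum_insert fun ha => (hlt a ha).false]
    have hs : ∑ k ∈ s, (2 : ℝ≥0∞) ^ k ≤ 2 * 2 ^ (a - 1) :=
      ih fun k hk => zpow_le_of_le one_le_two (by linarith [hlt k hk])
    rw [← two_zpow_add_one, sub_add_cancel] at hs
    calc 2 ^ a + ∑ k ∈ s, (2 : ℝ≥0∞) ^ k ≤ 2 ^ a + 2 ^ a := by gcongr
      _ ≤ 2 * t := by rw [← two_mul]; gcongr; exact h a (Finset.mem_insert_self a s)

lemma rpow_one_half_sq (u : ℝ≥0∞) : (u ^ (1 / 2 : ℝ)) ^ 2 = u := by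
  rw [← rpow_natCast, one_div, Nat.cast_ofNat, rpow_inv_rpow two_ne_zero]

lemma sum_mul_sq_le_sq_mul_sq {ι : Type*} (s : Finset ι) (f g : ι → ℝ≥0∞) :
    (∑ i ∈ s, f i * g i) ^ 2 ≤ (∑ i ∈ s, f i ^ 2) * ∑ i ∈ s, g i ^ 2 := by
  have h := inner_le_Lp_mul_Lq s f g Real.HolderConjugate.two_two
  simp only [rpow_two] at h
  calc (∑ i ∈ s, f i * g i) ^ 2
      ≤ ((∑ i ∈ s, f i ^ 2) ^ (1 / 2 : ℝ) * (∑ i ∈ s, g i ^ 2) ^ (1 / 2 : ℝ)) ^ 2 := by gcongr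
    _ = (∑ i ∈ s, f i ^ 2) * ∑ i ∈ s, g i ^ 2 := by rw [mul_pow, rpow_one_half_sq, rpow_one_half_sq]

end ENNReal

lemma Antitone.exists_and_not_add_one {P : ℤ → Prop} (hP : Antitone P) {j K : ℤ} (hj : P j)
    (hK : ¬ P K) : ∃ k, P k ∧ ¬ P (k + 1) := by
  obtain ⟨k, hk, hmax⟩ := Int.exists_greatest_of_bdd
    ⟨K, fun z hz => le_of_not_ge fun hKz => hK (hP hKz hz)⟩ ⟨j, hj⟩
  exact ⟨k, hk, fun h => by linarith [hmax _ h]⟩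

section Laminar

variable {α ι : Type*}

def IsLaminar (Q : ι → Set α) (s : Set ι) : Prop :=
  ∀ I ∈ s, ∀ J ∈ s, Q I ⊆ Q J ∨ Q J ⊆ Q I ∨ Disjoint (Q I) (Q J)

variable {Q : ι → Set α}

lemma IsLaminar.mono {s t : Set ι} (h : IsLaminar Q t) (hst : s ⊆ t) : IsLaminar Q s :=
  fun I hI J hJ => h I (hst hI) J (hst hJ)

lemma IsLaminar.exists_pairwiseDisjoint_cover {A : Finset ι} (h : IsLaminar Q A) :
    ∃ M ⊆ A, (M : Set ι).PairwiseDisjoint Q ∧ ∀ I ∈ A, ∃ J ∈ M, Q I ⊆ Q J := by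
  classical
  induction A using Finset.induction_on with
  | empty => exact ⟨∅, subset_rfl, by simp, by simp⟩
  | insert I A _ ih =>
    obtain ⟨M, hMA, hMd, hMc⟩ := ih (h.mono (by simp))
    -- `Q I` either lies in a chosen set or replaces the chosen sets it contains.
    by_cases hI : ∃ J ∈ M, Q I ⊆ Q J
    · refine ⟨M, hMA.trans (Finset.subset_insert _ _), hMd, ?_⟩
      simpa only [Finset.forall_mem_insert] using ⟨hI, hMc⟩
    push Not at hI
    refine ⟨insert I {J ∈ M | ¬ Q J ⊆ Q I},
      Finset.insert_subset_insert _ ((Finset.filter_subset _ _).trans hMA), ?_, ?_⟩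
    · rw [Finset.coe_insert, Finset.coe_filter]
      refine (hMd.subset fun J hJ => hJ.1).insert fun J ⟨hJM, hJI⟩ _ => ?_
      rcases h I (by simp) J (by simp [hMA hJM]) with hIJ | hJI' | hdisj
      · exact absurd hIJ (hI J hJM)
      · exact absurd hJI' hJI
      · exact hdisj
    · simp only [Finset.forall_mem_insert, Finset.exists_mem_insert, Finset.mem_filter]
      refine ⟨Or.inl subset_rfl, fun K hK => ?_⟩
      obtain ⟨J, hJM, hKJ⟩ := hMc K hK
      by_cases hJI : Q J ⊆ Q I
      · exact Or.inl (hKJ.trans hJI)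
      · exact Or.inr ⟨J, ⟨hJM, hJI⟩, hKJ⟩

open Classical in
lemma Finset.sum_le_sum_sum_of_cover {β : Type*} [AddCommMonoid β] [PartialOrder β]
    [IsOrderedAddMonoid β] [CanonicallyOrderedAdd β] {A M : Finset ι}
    (hcov : ∀ I ∈ A, ∃ J ∈ M, Q I ⊆ Q J) (g : ι → β) :
    ∑ I ∈ A, g I ≤ ∑ J ∈ M, ∑ I ∈ A with Q I ⊆ Q J, g I := by
  choose! c hcM hcQ using hcov
  rw [← Finset.sum_fiberwise_of_maps_to hcM]
  refine Finset.sum_le_sum fun J _ => Finset.sum_le_sum_of_subset fun I => ?_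
  simp only [Finset.mem_filter]
  rintro ⟨hIA, rfl⟩
  exact ⟨hIA, hcQ I hIA⟩

lemma sum_indicator_sdiff_le {β : Type*} [AddCommMonoid β] [PartialOrder β]
    [IsOrderedAddMonoid β] [CanonicallyOrderedAdd β] {A : Finset ι} {Ω : Set α} {g : ι → β}
    {c : β} (hc : ∀ p ∉ Ω, ∑ I ∈ A, (Q I).indicator (fun _ => g I) p ≤ c) (p : α) :
    ∑ I ∈ A, (Q I \ Ω).indicator (fun _ => g I) p ≤ (⋃ I ∈ A, Q I).indicator (fun _ => c) p := by
  by_cases hpU : p ∈ ⋃ I ∈ A, Q I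
  · rw [indicator_of_mem hpU]
    by_cases hpΩ : p ∈ Ω
    · simp [indicator_of_notMem (fun h : p ∈ _ \ Ω => h.2 hpΩ)]
    · refine le_trans (Finset.sum_le_sum fun I _ => ?_) (hc p hpΩ)
      exact indicator_le_indicator_of_subset sdiff_subset (fun _ => zero_le) p
  · rw [indicator_of_notMem hpU]
    simp only [mem_iUnion, not_exists] at hpU
    exact (Finset.sum_eq_zero fun I hI => indicator_of_notMem (fun h => hpU I hI h.1) _).le

end Laminar

section Measure

variable {α ι : Type*} [MeasurableSpace α] {μ : Measure α}

lemma measure_le_two_mul_measure_diff {s t : Set α} (hs : μ s ≠ ∞) (ht : MeasurableSet t)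
    (h : 2 * μ (s ∩ t) ≤ μ s) : μ s ≤ 2 * μ (s \ t) := by
  refine ENNReal.le_of_add_le_add_left hs ?_
  calc μ s + μ s = 2 * μ (s ∩ t) + 2 * μ (s \ t) := by
        rw [← two_mul, ← mul_add, measure_inter_add_sdiff s ht]
    _ ≤ μ s + 2 * μ (s \ t) := by gcongr

lemma exists_stopping_level {E : Set α} (hE0 : μ E ≠ 0) (hEtop : μ E ≠ ∞) {f : α → ℝ≥0∞}
    {j K : ℤ} (hj : ∀ p ∈ E, 2 ^ j < f p) (hK : ∀ p, f p ≤ 2 ^ K) :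
    ∃ k : ℤ, μ E < 2 * μ (E ∩ {p | 2 ^ k < f p}) ∧
      2 * μ (E ∩ {p | 2 ^ (k + 1) < f p}) ≤ μ E := by
  have hanti : Antitone fun k : ℤ => μ E < 2 * μ (E ∩ {p | 2 ^ k < f p}) := by
    intro k k' hkk' hk'
    refine hk'.trans_le ?_
    gcongr 2 * μ (E ∩ ?_)
    exact fun p hp => (ENNReal.zpow_le_of_le one_le_two hkk').trans_lt hp
  have hEj : E ∩ {p | 2 ^ j < f p} = E := inter_eq_left.2 hj
  obtain ⟨k, hk, hk'⟩ := hanti.exists_and_not_add_one (j := j) (K := K)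
    (by rw [hEj, two_mul]; exact ENNReal.lt_add_right hEtop hE0)
    (by simp [fun p => not_lt.2 (hK p)])
  exact ⟨k, hk, not_lt.1 hk'⟩

lemma sum_two_zpow_mul_measure_lt_le {f : α → ℝ≥0∞} (hf : Measurable f)
    (s : Finset ℤ) : ∑ k ∈ s, 2 ^ k * μ {p | 2 ^ k < f p} ≤ 2 * ∫⁻ p, f p ∂μ := by
  classical
  have hm : ∀ k : ℤ, MeasurableSet {p | (2 : ℝ≥0∞) ^ k < f p} :=
    fun k => measurableSet_lt measurable_const hf
  calc ∑ k ∈ s, 2 ^ k * μ {p | 2 ^ k < f p}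
      = ∫⁻ p, ∑ k ∈ s, {p | (2 : ℝ≥0∞) ^ k < f p}.indicator (fun _ => 2 ^ k) p ∂μ := by
        rw [lintegral_finsetSum _ fun k _ => measurable_const.indicator (hm k)]
        exact Finset.sum_congr rfl fun k _ => (lintegral_indicator_const (hm k) _).symm
    _ ≤ ∫⁻ p, 2 * f p ∂μ := lintegral_mono fun p => by
        simp only [indicator_apply, mem_ofPred_eq, ← Finset.sum_filter]
        exact ENNReal.sum_two_zpow_le_two_mul fun k hk => (Finset.mem_filter.1 hk).2.le
    _ = 2 * ∫⁻ p, f p ∂μ := lintegral_const_mul 2 hf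

variable {Q : ι → Set α}

open Classical in
def IsCarleson (μ : Measure α) (Q : ι → Set α) (F : Finset ι) (y : ι → ℝ≥0∞) (B : ℝ≥0∞) : Prop :=
  ∀ R ∈ F, ∑ I ∈ F with Q I ⊆ Q R, y I ^ 2 ≤ B ^ 2 * μ (Q R)

open Classical in
lemma IsCarleson.mono {F G : Finset ι} {y : ι → ℝ≥0∞} {B : ℝ≥0∞} (h : IsCarleson μ Q G y B)
    (hFG : F ⊆ G) : IsCarleson μ Q F y B := fun R hR =>
  (Finset.sum_le_sum_of_subset (Finset.filter_subset_filter _ hFG)).trans (h R (hFG hR))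

lemma IsLaminar.exists_cover_sum_measure_le {A : Finset ι} (hQ : IsLaminar Q A)
    (hQm : ∀ I ∈ A, MeasurableSet (Q I)) {Ω : Set α} (hΩ : MeasurableSet Ω)
    (hA : ∀ I ∈ A, μ (Q I) ≤ 2 * μ (Q I ∩ Ω)) :
    ∃ M ⊆ A, (∀ I ∈ A, ∃ J ∈ M, Q I ⊆ Q J) ∧ ∑ J ∈ M, μ (Q J) ≤ 2 * μ Ω := by
  obtain ⟨M, hMA, hMd, hMc⟩ := hQ.exists_pairwiseDisjoint_cover
  refine ⟨M, hMA, hMc, ?_⟩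
  calc ∑ J ∈ M, μ (Q J) ≤ ∑ J ∈ M, 2 * μ (Q J ∩ Ω) :=
        Finset.sum_le_sum fun J hJ => hA J (hMA hJ)
    _ = 2 * μ (⋃ J ∈ M, Q J ∩ Ω) := by
        rw [← Finset.mul_sum, measure_biUnion_finset (hMd.mono fun J => inter_subset_left)
          fun J hJ => (hQm J (hMA hJ)).inter hΩ]
    _ ≤ 2 * μ Ω := by gcongr; exact iUnion₂_subset fun J _ => inter_subset_right

lemma sum_sq_le_of_sparse {A : Finset ι} (hQm : ∀ I ∈ A, MeasurableSet (Q I))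
    (hQ0 : ∀ I ∈ A, μ (Q I) ≠ 0) (hQtop : ∀ I ∈ A, μ (Q I) ≠ ∞) {x : ι → ℝ≥0∞} {Ω : Set α}
    (hΩ : MeasurableSet Ω) {c : ℝ≥0∞} (hA : ∀ I ∈ A, 2 * μ (Q I ∩ Ω) ≤ μ (Q I))
    (hc : ∀ p ∉ Ω, ∑ I ∈ A, (Q I).indicator (fun _ => x I ^ 2 * (μ (Q I))⁻¹) p ≤ c) :
    ∑ I ∈ A, x I ^ 2 ≤ 2 * c * μ (⋃ I ∈ A, Q I) := by
  have hm : ∀ I ∈ A, MeasurableSet (Q I \ Ω) := fun I hI => (hQm I hI).diff hΩ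
  calc ∑ I ∈ A, x I ^ 2 = ∑ I ∈ A, x I ^ 2 * (μ (Q I))⁻¹ * μ (Q I) :=
        Finset.sum_congr rfl fun I hI => by
          rw [mul_assoc, ENNReal.inv_mul_cancel (hQ0 I hI) (hQtop I hI), mul_one]
    _ ≤ ∑ I ∈ A, 2 * (x I ^ 2 * (μ (Q I))⁻¹ * μ (Q I \ Ω)) := by
        refine Finset.sum_le_sum fun I hI => ?_
        rw [mul_left_comm 2]
        gcongr
        exact measure_le_two_mul_measure_diff (hQtop I hI) hΩ (hA I hI)
    _ = 2 * ∫⁻ p, ∑ I ∈ A, (Q I \ Ω).indicator (fun _ => x I ^ 2 * (μ (Q I))⁻¹) p ∂μ := by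
        rw [lintegral_finsetSum _ fun I hI => measurable_const.indicator (hm I hI),
          Finset.mul_sum]
        exact Finset.sum_congr rfl fun I hI => by rw [lintegral_indicator_const (hm I hI)]
    _ ≤ 2 * ∫⁻ p, (⋃ I ∈ A, Q I).indicator (fun _ => c) p ∂μ := by
        gcongr with p; exact sum_indicator_sdiff_le hc p
    _ = 2 * c * μ (⋃ I ∈ A, Q I) := by
        rw [lintegral_indicator_const (Finset.measurableSet_biUnion A hQm), mul_assoc]

end Measure

section SquareFunction

variable {α ι : Type*} [MeasurableSpace α]

noncomputable def squareFunction (μ : Measure α) (Q : ι → Set α) (F : Finset ι) (x : ι → ℝ≥0∞)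
    (p : α) : ℝ≥0∞ :=
  (∑ I ∈ F, (Q I).indicator (fun _ => x I ^ 2 * (μ (Q I))⁻¹) p) ^ (1 / 2 : ℝ)

variable {μ : Measure α} {Q : ι → Set α} {F : Finset ι} {x : ι → ℝ≥0∞}

lemma measurable_squareFunction (hQm : ∀ I ∈ F, MeasurableSet (Q I)) :
    Measurable (squareFunction μ Q F x) :=
  (Finset.measurable_sum F fun I hI => measurable_const.indicator (hQm I hI)).pow_const _

lemma squareFunction_sq (p : α) :
    squareFunction μ Q F x p ^ 2 = ∑ I ∈ F, (Q I).indicator (fun _ => x I ^ 2 * (μ (Q I))⁻¹) p :=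
  ENNReal.rpow_one_half_sq _

lemma squareFunction_mono {G : Finset ι} (hFG : F ⊆ G) (p : α) :
    squareFunction μ Q F x p ≤ squareFunction μ Q G x p :=
  ENNReal.rpow_le_rpow (Finset.sum_le_sum_of_subset hFG) (by norm_num)

lemma rpow_le_squareFunction {I : ι} (hI : I ∈ F) {p : α} (hp : p ∈ Q I) :
    (x I ^ 2 * (μ (Q I))⁻¹) ^ (1 / 2 : ℝ) ≤ squareFunction μ Q F x p := by
  refine ENNReal.rpow_le_rpow ?_ (by norm_num)
  simpa [indicator_of_mem hp] using Finset.single_le_sum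
    (f := fun J => (Q J).indicator (fun _ => x J ^ 2 * (μ (Q J))⁻¹) p) (fun _ _ => zero_le) hI

lemma exists_squareFunction_le_two_zpow (hQ0 : ∀ I ∈ F, μ (Q I) ≠ 0)
    (hx : ∀ I ∈ F, x I ≠ ∞) : ∃ K : ℤ, ∀ p, squareFunction μ Q F x p ≤ 2 ^ K := by
  have hfin : (∑ I ∈ F, x I ^ 2 * (μ (Q I))⁻¹) ^ (1 / 2 : ℝ) ≠ ∞ :=
    ENNReal.rpow_ne_top_of_nonneg (by norm_num) <| ENNReal.sum_ne_top.2 fun I hI =>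
      ENNReal.mul_ne_top (ENNReal.pow_ne_top (hx I hI)) (ENNReal.inv_ne_top.2 (hQ0 I hI))
  obtain ⟨K, hK⟩ := ENNReal.exists_le_two_zpow hfin
  refine ⟨K, fun p => le_trans ?_ hK⟩
  exact ENNReal.rpow_le_rpow (Finset.sum_le_sum fun I _ => indicator_le_self _ _ p) (by norm_num)

lemma sq_sum_mul_le_of_dense_of_sparse {A : Finset ι} (hQ : IsLaminar Q A)
    (hQm : ∀ I ∈ A, MeasurableSet (Q I)) (hQ0 : ∀ I ∈ A, μ (Q I) ≠ 0)
    (hQtop : ∀ I ∈ A, μ (Q I) ≠ ∞) {y : ι → ℝ≥0∞} {B : ℝ≥0∞}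
    (hCar : IsCarleson μ Q A y B)
    {Ω Ω' : Set α} (hΩ : MeasurableSet Ω) (hΩ' : MeasurableSet Ω') {c : ℝ≥0∞}
    (hdense : ∀ I ∈ A, μ (Q I) ≤ 2 * μ (Q I ∩ Ω))
    (hsparse : ∀ I ∈ A, 2 * μ (Q I ∩ Ω') ≤ μ (Q I))
    (hc : ∀ p ∉ Ω', ∑ I ∈ A, (Q I).indicator (fun _ => x I ^ 2 * (μ (Q I))⁻¹) p ≤ c) :
    (∑ I ∈ A, x I * y I) ^ 2 ≤ 8 * c * B ^ 2 * μ Ω ^ 2 := by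
  classical
  obtain ⟨M, hMA, hMc, hMΩ⟩ := hQ.exists_cover_sum_measure_le hQm hΩ hdense
  have hU : μ (⋃ I ∈ A, Q I) ≤ 2 * μ Ω := calc
    μ (⋃ I ∈ A, Q I) ≤ μ (⋃ J ∈ M, Q J) := measure_mono <| iUnion₂_subset fun I hI =>
        let ⟨J, hJ, hIJ⟩ := hMc I hI
        hIJ.trans (subset_biUnion_of_mem (u := Q) hJ)
    _ ≤ ∑ J ∈ M, μ (Q J) := measure_biUnion_finset_le _ _
    _ ≤ 2 * μ Ω := hMΩ
  have hx : ∑ I ∈ A, x I ^ 2 ≤ 2 * c * (2 * μ Ω) :=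
    (sum_sq_le_of_sparse hQm hQ0 hQtop hΩ' hsparse hc).trans (by gcongr)
  have hy : ∑ I ∈ A, y I ^ 2 ≤ B ^ 2 * (2 * μ Ω) := calc
    ∑ I ∈ A, y I ^ 2 ≤ ∑ J ∈ M, ∑ I ∈ A with Q I ⊆ Q J, y I ^ 2 :=
        Finset.sum_le_sum_sum_of_cover hMc _
    _ ≤ ∑ J ∈ M, B ^ 2 * μ (Q J) := Finset.sum_le_sum fun J hJ => hCar J (hMA hJ)
    _ ≤ B ^ 2 * (2 * μ Ω) := by rw [← Finset.mul_sum]; gcongr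
  calc (∑ I ∈ A, x I * y I) ^ 2 ≤ (∑ I ∈ A, x I ^ 2) * ∑ I ∈ A, y I ^ 2 :=
        ENNReal.sum_mul_sq_le_sq_mul_sq A x y
    _ ≤ (2 * c * (2 * μ Ω)) * (B ^ 2 * (2 * μ Ω)) := by gcongr
    _ = 8 * c * B ^ 2 * μ Ω ^ 2 := by ring

lemma sum_mul_le_of_level (hQ : IsLaminar Q F) (hQm : ∀ I ∈ F, MeasurableSet (Q I))
    (hQ0 : ∀ I ∈ F, μ (Q I) ≠ 0) (hQtop : ∀ I ∈ F, μ (Q I) ≠ ∞) {y : ι → ℝ≥0∞} {B : ℝ≥0∞}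
    (hCar : IsCarleson μ Q F y B)
    {A : Finset ι} (hAF : A ⊆ F) {k : ℤ}
    (hA : ∀ I ∈ A, μ (Q I) < 2 * μ (Q I ∩ {p | 2 ^ k < squareFunction μ Q F x p}) ∧
      2 * μ (Q I ∩ {p | 2 ^ (k + 1) < squareFunction μ Q F x p}) ≤ μ (Q I)) :
    ∑ I ∈ A, x I * y I ≤ 6 * B * (2 ^ k * μ {p | 2 ^ k < squareFunction μ Q F x p}) := by
  have hS := measurable_squareFunction (μ := μ) (x := x) hQm
  have key := sq_sum_mul_le_of_dense_of_sparse (hQ.mono (Finset.coe_subset.2 hAF))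
    (fun I hI => hQm I (hAF hI)) (fun I hI => hQ0 I (hAF hI)) (fun I hI => hQtop I (hAF hI))
    (hCar.mono hAF)
    (measurableSet_lt measurable_const hS) (measurableSet_lt measurable_const hS)
    (fun I hI => (hA I hI).1.le) (fun I hI => (hA I hI).2) (c := (2 ^ (k + 1)) ^ 2)
    fun p hp => calc
      _ ≤ _ := Finset.sum_le_sum_of_subset hAF
      _ = squareFunction μ Q F x p ^ 2 := (squareFunction_sq p).symm
      _ ≤ (2 ^ (k + 1)) ^ 2 := by gcongr; exact not_lt.1 hp
  rw [← ENNReal.pow_le_pow_left_iff two_ne_zero]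
  calc _ ≤ _ := key
    _ = 32 * (2 ^ k * B * μ {p | 2 ^ k < squareFunction μ Q F x p}) ^ 2 := by
        rw [ENNReal.two_zpow_add_one]; ring
    _ ≤ 36 * (2 ^ k * B * μ {p | 2 ^ k < squareFunction μ Q F x p}) ^ 2 := by gcongr; norm_num
    _ = _ := by ring

theorem sum_mul_le_twelve_mul_lintegral_squareFunction_of_ne_zero (hQ : IsLaminar Q F)
    (hQm : ∀ I ∈ F, MeasurableSet (Q I))
    (hQ0 : ∀ I ∈ F, μ (Q I) ≠ 0) (hQtop : ∀ I ∈ F, μ (Q I) ≠ ∞) (hx0 : ∀ I ∈ F, x I ≠ 0)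
    (hx : ∀ I ∈ F, x I ≠ ∞) {y : ι → ℝ≥0∞} {B : ℝ≥0∞}
    (hCar : IsCarleson μ Q F y B) :
    ∑ I ∈ F, x I * y I ≤ 12 * B * ∫⁻ p, squareFunction μ Q F x p ∂μ := by
  obtain ⟨K, hK⟩ := exists_squareFunction_le_two_zpow hQ0 hx
  have hlevel : ∀ I ∈ F, ∃ k : ℤ,
      μ (Q I) < 2 * μ (Q I ∩ {p | 2 ^ k < squareFunction μ Q F x p}) ∧
      2 * μ (Q I ∩ {p | 2 ^ (k + 1) < squareFunction μ Q F x p}) ≤ μ (Q I) := by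
    intro I hI
    have hq : (x I ^ 2 * (μ (Q I))⁻¹) ^ (1 / 2 : ℝ) ≠ 0 := by simp [hx0 I hI, hQtop I hI]
    obtain ⟨j, hj⟩ := ENNReal.exists_two_zpow_lt hq
    exact exists_stopping_level (hQ0 I hI) (hQtop I hI)
      (fun p hp => hj.trans_le (rpow_le_squareFunction hI hp)) hK
  choose! kf hkf using hlevel
  calc ∑ I ∈ F, x I * y I = ∑ k ∈ F.image kf, ∑ I ∈ F with kf I = k, x I * y I :=
        (Finset.sum_fiberwise_of_maps_to (fun I hI => Finset.mem_image_of_mem kf hI) _).symm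
    _ ≤ ∑ k ∈ F.image kf, 6 * B * (2 ^ k * μ {p | 2 ^ k < squareFunction μ Q F x p}) := by
        refine Finset.sum_le_sum fun k _ => sum_mul_le_of_level hQ hQm hQ0 hQtop hCar
          (Finset.filter_subset _ F) fun I hI => ?_
        obtain ⟨hIF, rfl⟩ := Finset.mem_filter.1 hI
        exact hkf I hIF
    _ ≤ 6 * B * (2 * ∫⁻ p, squareFunction μ Q F x p ∂μ) := by
        rw [← Finset.mul_sum]
        gcongr
        exact sum_two_zpow_mul_measure_lt_le (measurable_squareFunction hQm) _
    _ = 12 * B * ∫⁻ p, squareFunction μ Q F x p ∂μ := by ring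

theorem sum_mul_le_twelve_mul_lintegral_squareFunction (hQ : IsLaminar Q F)
    (hQm : ∀ I ∈ F, MeasurableSet (Q I)) (hQ0 : ∀ I ∈ F, μ (Q I) ≠ 0)
    (hQtop : ∀ I ∈ F, μ (Q I) ≠ ∞) (hx : ∀ I ∈ F, x I ≠ ∞) {y : ι → ℝ≥0∞} {B : ℝ≥0∞}
    (hCar : IsCarleson μ Q F y B) :
    ∑ I ∈ F, x I * y I ≤ 12 * B * ∫⁻ p, squareFunction μ Q F x p ∂μ := by
  have hF' : {I ∈ F | x I ≠ 0} ⊆ F := Finset.filter_subset _ F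
  calc ∑ I ∈ F, x I * y I = ∑ I ∈ F with x I ≠ 0, x I * y I :=
        (Finset.sum_filter_of_ne fun I _ h => left_ne_zero_of_mul h).symm
    _ ≤ 12 * B * ∫⁻ p, squareFunction μ Q {I ∈ F | x I ≠ 0} x p ∂μ :=
        sum_mul_le_twelve_mul_lintegral_squareFunction_of_ne_zero
          (hQ.mono (Finset.coe_subset.2 hF')) (fun I hI => hQm I (hF' hI))
          (fun I hI => hQ0 I (hF' hI)) (fun I hI => hQtop I (hF' hI))
          (fun I hI => (Finset.mem_filter.1 hI).2) (fun I hI => hx I (hF' hI))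
          (hCar.mono hF')
    _ ≤ 12 * B * ∫⁻ p, squareFunction μ Q F x p ∂μ := by
        gcongr with p
        exact squareFunction_mono hF' p

end SquareFunction

section DyadicCube

variable {n : ℕ}

lemma mem_dyadicCube_iff {I : ℤ × (Fin n → ℤ)} {x : EuclideanSpace ℝ (Fin n)} :
    x ∈ dyadicCube n I ↔ ∀ i, ⌊(2 : ℝ) ^ I.1 * x i⌋ = I.2 i := by
  simp only [dyadicCube, mem_ofPred_eq, Int.floor_eq_iff]

lemma floor_two_zpow_mul_eq_floor_div {j j' : ℤ} (h : j' ≤ j) (r : ℝ) :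
    ⌊(2 : ℝ) ^ j' * r⌋ = ⌊(2 : ℝ) ^ j * r⌋ / 2 ^ (j - j').toNat := by
  have hsplit : (2 : ℝ) ^ j' * r = 2 ^ j * r / (2 ^ (j - j').toNat : ℕ) := by
    rw [Nat.cast_pow, Nat.cast_ofNat, ← zpow_natCast, Int.toNat_of_nonneg (sub_nonneg.2 h),
      zpow_sub₀ two_ne_zero]
    field_simp
  rw [hsplit, Int.floor_div_natCast]
  norm_cast

lemma dyadicCube_subset_of_le {I J : ℤ × (Fin n → ℤ)} (h : J.1 ≤ I.1)
    {x : EuclideanSpace ℝ (Fin n)} (hxI : x ∈ dyadicCube n I) (hxJ : x ∈ dyadicCube n J) :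
    dyadicCube n I ⊆ dyadicCube n J := by
  rw [mem_dyadicCube_iff] at hxI hxJ
  intro y hy
  rw [mem_dyadicCube_iff] at hy ⊢
  intro i
  rw [floor_two_zpow_mul_eq_floor_div h, hy, ← hxI, ← floor_two_zpow_mul_eq_floor_div h, hxJ]

lemma isLaminar_dyadicCube (n : ℕ) : IsLaminar (dyadicCube n) univ := by
  intro I _ J _
  by_cases hd : Disjoint (dyadicCube n I) (dyadicCube n J)
  · exact Or.inr (Or.inr hd)
  obtain ⟨x, hxI, hxJ⟩ := not_disjoint_iff.1 hd
  rcases le_total J.1 I.1 with h | h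
  · exact Or.inl (dyadicCube_subset_of_le h hxI hxJ)
  · exact Or.inr (Or.inl (dyadicCube_subset_of_le h hxJ hxI))

lemma dyadicCube_eq_preimage (I : ℤ × (Fin n → ℤ)) :
    dyadicCube n I = (MeasurableEquiv.toLp 2 (Fin n → ℝ)).symm ⁻¹'
      univ.pi fun i => Ico ((I.2 i : ℝ) / 2 ^ I.1) ((I.2 i + 1) / 2 ^ I.1) := by
  ext x
  have h2 : (0 : ℝ) < 2 ^ I.1 := zpow_pos two_pos _
  simp only [dyadicCube, mem_preimage, mem_univ_pi, mem_Ico, mem_ofPred_eq,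
    div_le_iff₀ h2, lt_div_iff₀ h2, mul_comm]
  rfl

lemma measurableSet_dyadicCube (I : ℤ × (Fin n → ℤ)) : MeasurableSet (dyadicCube n I) := by
  rw [dyadicCube_eq_preimage]
  exact (MeasurableSet.univ_pi fun _ => measurableSet_Ico).preimage
    (MeasurableEquiv.toLp 2 (Fin n → ℝ)).symm.measurable

lemma volume_dyadicCube (I : ℤ × (Fin n → ℤ)) :
    volume (dyadicCube n I) = ENNReal.ofReal (2 ^ (-I.1)) ^ n := by
  rw [dyadicCube_eq_preimage,
    (EuclideanSpace.volume_preserving_symm_measurableEquiv_toLp (Fin n)).measure_preimage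
      (MeasurableSet.univ_pi fun _ => measurableSet_Ico).nullMeasurableSet,
    volume_pi_pi]
  simp [Real.volume_Ico, ← sub_div, zpow_neg]

lemma volume_dyadicCube_ne_zero (I : ℤ × (Fin n → ℤ)) : volume (dyadicCube n I) ≠ 0 := by
  rw [volume_dyadicCube]
  exact pow_ne_zero _ (ENNReal.ofReal_pos.2 (zpow_pos two_pos _)).ne'

lemma volume_dyadicCube_ne_top (I : ℤ × (Fin n → ℤ)) : volume (dyadicCube n I) ≠ ∞ := by
  simp [volume_dyadicCube]

end DyadicCube

/-- Frazier–Jawerth duality inequality between the discrete square-function (ℋ¹) norm of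
`(a_I)` and the Carleson/BMO norm of `(b_I)`. -/
theorem frazier_jawerth_duality (n : ℕ) :
    ∃ C : ℝ, 0 < C ∧ ∀ (a b : ℤ × (Fin n → ℤ) → ℝ) (B : ℝ), 0 ≤ B →
      (∀ R : ℤ × (Fin n → ℤ),
        (∑' I : {I : ℤ × (Fin n → ℤ) // dyadicCube n I ⊆ dyadicCube n R},
            ENNReal.ofReal (b I.1 ^ 2))
          ≤ ENNReal.ofReal (B ^ 2) * volume (dyadicCube n R)) →
      (∑' I : ℤ × (Fin n → ℤ), ENNReal.ofReal (|a I| * |b I|)) ≤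
        ENNReal.ofReal (C * B) *
          ∫⁻ x, (∑' I : ℤ × (Fin n → ℤ),
            (dyadicCube n I).indicator
              (fun _ => ENNReal.ofReal (a I ^ 2) * (volume (dyadicCube n I))⁻¹) x)
            ^ (1 / 2 : ℝ) := by
  refine ⟨12, by norm_num, fun a b B hB hCar => ?_⟩
  have hsq (r : ℝ) : ENNReal.ofReal |r| ^ 2 = ENNReal.ofReal (r ^ 2) := by
    rw [← ENNReal.ofReal_pow (abs_nonneg r), sq_abs]
  rw [ENNReal.tsum_eq_iSup_sum]
  refine iSup_le fun F => ?_
  have hCarF : IsCarleson volume (dyadicCube n) F (fun I => ENNReal.ofReal |b I|)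
      (ENNReal.ofReal B) := fun R _ => by
    simp only [hsq, ← Finset.sum_subtype_eq_sum_filter, ← ENNReal.ofReal_pow hB]
    exact (ENNReal.sum_le_tsum _).trans (hCar R)
  calc ∑ I ∈ F, ENNReal.ofReal (|a I| * |b I|)
      = ∑ I ∈ F, ENNReal.ofReal |a I| * ENNReal.ofReal |b I| := by
        simp only [ENNReal.ofReal_mul (abs_nonneg _)]
    _ ≤ 12 * ENNReal.ofReal B *
          ∫⁻ x, squareFunction volume (dyadicCube n) F (fun I => ENNReal.ofReal |a I|) x :=
        sum_mul_le_twelve_mul_lintegral_squareFunction ((isLaminar_dyadicCube n).mono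
          (subset_univ _)) (fun I _ => measurableSet_dyadicCube I)
          (fun I _ => volume_dyadicCube_ne_zero I) (fun I _ => volume_dyadicCube_ne_top I)
          (fun I _ => ENNReal.ofReal_ne_top) hCarF
    _ ≤ _ := by
        rw [ENNReal.ofReal_mul (by norm_num), ENNReal.ofReal_ofNat]
        gcongr with x
        simp only [squareFunction, hsq]
        gcongr
        exact ENNReal.sum_le_tsum F
end
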